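/- arXiv:1709.05744 — 4 statements merged into one kernel-verified Lean document; each statement's English description precedes it below -/
import Mathlib

section
/- Let M be a positive integer, ε ∈ (0, 1/2), and P > 0. Set φ = (1 − 4ε²)^{−2/M}, γ_{e,min} = 2φ − 1 − 2√(φ(φ−1)), and γ_min = γ_{e,min} − (1 − γ_{e,min})/P. If γ ∈ [0,1] satisfies γ ≥ γ_min, then the effective energy ratio γ_e = (1 + γ·P)/(1 + P) satisfies √(1 − (4γ_e/(γ_e+1)²)^{M/2}) ≤ 2ε; that is, the worst-case upper bound d_TV,up on the total variation distance is at most 2ε. -/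
set_option maxHeartbeats 1000000 in
/-- Theorem 3: With `φ = (1 − 4ε²)^{−2/M}`,
`γ_{e,min} = 2φ − 1 − 2√(φ(φ−1))` and `γ_min = γ_{e,min} − (1 − γ_{e,min})/P`,
if `γ ∈ [0,1]` satisfies `γ ≥ γ_min`, then the effective energy ratio
`γ_e = (1 + γP)/(1 + P)` makes the worst-case TV upper bound at most `2ε`. -/
theorem agots_asymptotic_indistinguishability_energy_ratio
    (M : ℕ) (hM : 0 < M) (ε : ℝ) (hε0 : 0 < ε) (hε1 : ε < 1 / 2)
    (P : ℝ) (hP : 0 < P)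
    (φ γemin γmin : ℝ)
    (hφ : φ = (1 - 4 * ε ^ 2) ^ (-(2 : ℝ) / M))
    (hγemin : γemin = 2 * φ - 1 - 2 * Real.sqrt (φ * (φ - 1)))
    (hγmin : γmin = γemin - (1 - γemin) / P)
    (γ : ℝ) (hγ0 : 0 ≤ γ) (hγ1 : γ ≤ 1) (hγ : γmin ≤ γ)
    (γe : ℝ) (hγe : γe = (1 + γ * P) / (1 + P)) :
    Real.sqrt (1 - (4 * γe / (γe + 1) ^ 2) ^ ((M : ℝ) / 2)) ≤ 2 * ε := by
  have hb0 : (0:ℝ) < 1 - 4 * ε ^ 2 := by nlinarith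
  have hb1 : 1 - 4 * ε ^ 2 < 1 := by nlinarith
  have hMR : (0:ℝ) < (M:ℝ) := by exact_mod_cast hM
  have hφ1 : 1 < φ := by
    rw [hφ, Real.one_lt_rpow_iff_of_pos hb0]
    exact Or.inr ⟨hb1, div_neg_of_neg_of_pos (by norm_num) hMR⟩
  set s := Real.sqrt (φ * (φ - 1)) with hs
  have hs0 : 0 ≤ s := Real.sqrt_nonneg _
  have hs2 : s ^ 2 = φ * (φ - 1) := Real.sq_sqrt (by nlinarith)
  -- γemin bounds
  have hγemin_pos : 0 < γemin := by rw [hγemin]; nlinarith [hs2, hs0, hφ1]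
  have hγemin_le1 : γemin ≤ 1 := by rw [hγemin]; nlinarith [hs2, hs0, hφ1]
  -- key identity: γemin is a root of (x+1)^2 = 4φx
  have hkey : (γemin + 1) ^ 2 = 4 * φ * γemin := by
    rw [hγemin]; linear_combination 4 * hs2
  -- γe bounds
  have hP1 : (0:ℝ) < 1 + P := by linarith
  have hγe_pos : 0 < γe := by
    rw [hγe]; exact div_pos (by nlinarith) hP1
  have hγe1 : γe ≤ 1 := by
    rw [hγe, div_le_one hP1]; nlinarith
  have h1 : γmin * P = γemin * P - (1 - γemin) := by
    rw [hγmin]; field_simp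
  have hγe_ge : γemin ≤ γe := by
    rw [hγe, le_div_iff₀ hP1]
    have h2 : γmin * P ≤ γ * P := mul_le_mul_of_nonneg_right hγ hP.le
    nlinarith
  -- quadratic inequality: (γe+1)^2 ≤ 4φγe
  have hfac : 0 ≤ (γe - γemin) * (4 * φ - 2 - γe - γemin) :=
    mul_nonneg (by linarith) (by linarith)
  have hexp : (γe - γemin) * (4 * φ - 2 - γe - γemin) = 4 * φ * γe - (γe + 1) ^ 2 := by
    linear_combination hkey
  have hquad : (γe + 1) ^ 2 ≤ 4 * φ * γe := by rw [hexp] at hfac; linarith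
  -- the ratio t
  have hsq_pos : (0:ℝ) < (γe + 1) ^ 2 := by positivity
  have hφ0 : (0:ℝ) < φ := by linarith
  have ht_ge : φ⁻¹ ≤ 4 * γe / (γe + 1) ^ 2 := by
    rw [inv_eq_one_div, div_le_div_iff₀ hφ0 hsq_pos]
    linarith [hquad]
  have hφinv : φ⁻¹ = (1 - 4 * ε ^ 2) ^ ((2:ℝ) / M) := by
    rw [hφ, ← Real.rpow_neg hb0.le, neg_div, neg_neg]
  have hinv_pos : (0:ℝ) < φ⁻¹ := by positivity
  -- raise to power M/2
  have hpow : (φ⁻¹) ^ ((M:ℝ) / 2) ≤ (4 * γe / (γe + 1) ^ 2) ^ ((M:ℝ) / 2) :=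
    Real.rpow_le_rpow hinv_pos.le ht_ge (by positivity)
  have hcomp : (φ⁻¹) ^ ((M:ℝ) / 2) = 1 - 4 * ε ^ 2 := by
    rw [hφinv, ← Real.rpow_mul hb0.le,
      show (2:ℝ) / M * ((M:ℝ) / 2) = 1 by field_simp, Real.rpow_one]
  have hfin : 1 - (4 * γe / (γe + 1) ^ 2) ^ ((M:ℝ) / 2) ≤ 4 * ε ^ 2 := by
    rw [hcomp] at hpow; linarith
  calc Real.sqrt (1 - (4 * γe / (γe + 1) ^ 2) ^ ((M : ℝ) / 2))
      ≤ Real.sqrt ((2 * ε) ^ 2) := Real.sqrt_le_sqrt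
        (by have h4 : (2 * ε) ^ 2 = 4 * ε ^ 2 := by ring
            linarith [hfin])
    _ = 2 * ε := Real.sqrt_sq (by linarith)
end

section
/- Let ε ∈ (0, 1/2) and let γ_e ∈ (0, 1). Set C = log(4γ_e/(γ_e+1)²), which is strictly negative. If M is a positive integer satisfying M ≤ (2/C)·log(1 − 4ε²), then √(1 − (4γ_e/(γ_e+1)²)^{M/2}) ≤ 2ε; that is, the worst-case upper bound d_TV,up on the total variation distance is at most 2ε. -/
/-- Theorem 4: For `ε ∈ (0,1/2)` and `γ_e ∈ (0,1)`, the constant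
`C = log(4γ_e/(γ_e+1)²)` is strictly negative, and if `M ≤ (2/C)·log(1 − 4ε²)` then the
worst-case TV upper bound `√(1 − (4γ_e/(γ_e+1)²)^{M/2})` is at most `2ε`. -/
theorem agots_max_ciphertext_length
    (ε : ℝ) (hε0 : 0 < ε) (hε1 : ε < 1 / 2)
    (γe : ℝ) (hγe0 : 0 < γe) (hγe1 : γe < 1)
    (C : ℝ) (hC : C = Real.log (4 * γe / (γe + 1) ^ 2))
    (M : ℕ) (hM : 0 < M)
    (hMle : (M : ℝ) ≤ (2 / C) * Real.log (1 - 4 * ε ^ 2)) :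
    C < 0 ∧
    Real.sqrt (1 - (4 * γe / (γe + 1) ^ 2) ^ ((M : ℝ) / 2)) ≤ 2 * ε := by
  set r : ℝ := 4 * γe / (γe + 1) ^ 2 with hr
  have hden : (0:ℝ) < (γe + 1) ^ 2 := by positivity
  have hr0 : 0 < r := by positivity
  have hr1 : r < 1 := by
    rw [hr, div_lt_one hden]
    nlinarith [sq_nonneg (γe - 1)]
  have hCneg : C < 0 := by
    rw [hC]; exact Real.log_neg hr0 hr1
  refine ⟨hCneg, ?_⟩
  have hL : (0:ℝ) < 1 - 4 * ε ^ 2 := by nlinarith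
  -- From hMle and C < 0: M * C ≥ 2 * log (1 - 4ε²)
  have hmul : Real.log (1 - 4 * ε ^ 2) ≤ (M : ℝ) / 2 * C := by
    have h2 : (M : ℝ) * C ≥ (2 / C) * Real.log (1 - 4 * ε ^ 2) * C :=
      mul_le_mul_of_nonpos_right hMle (le_of_lt hCneg)
    have hCne : C ≠ 0 := ne_of_lt hCneg
    have : (2 / C) * Real.log (1 - 4 * ε ^ 2) * C = 2 * Real.log (1 - 4 * ε ^ 2) := by
      field_simp
    linarith [h2, this ▸ h2]
  have hrpow : 1 - 4 * ε ^ 2 ≤ r ^ ((M : ℝ) / 2) := by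
    rw [Real.rpow_def_of_pos hr0]
    calc 1 - 4 * ε ^ 2 = Real.exp (Real.log (1 - 4 * ε ^ 2)) := (Real.exp_log hL).symm
      _ ≤ Real.exp ((M : ℝ) / 2 * C) := Real.exp_le_exp.mpr hmul
      _ = Real.exp (Real.log r * ((M : ℝ) / 2)) := by rw [hC, mul_comm]
  have : 1 - r ^ ((M : ℝ) / 2) ≤ 4 * ε ^ 2 := by linarith
  calc Real.sqrt (1 - r ^ ((M : ℝ) / 2)) ≤ Real.sqrt (4 * ε ^ 2) :=
        Real.sqrt_le_sqrt this
    _ = 2 * ε := by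
        rw [show 4 * ε ^ 2 = (2 * ε) ^ 2 by ring]
        exact Real.sqrt_sq (by positivity)
end

section
/- Let M be a positive integer and ε ∈ (0, 1/2). Set φ = (1 − 4ε²)^{−2/M} and γ_{e,min} = 2φ − 1 − 2√(φ(φ−1)). Suppose γ ∈ [0,1] satisfies γ < γ_{e,min}, and suppose P > 0 satisfies P ≤ (1 − γ_{e,min})/(γ_{e,min} − γ). Then the effective energy ratio γ_e = (1 + γ·P)/(1 + P) satisfies γ_e ≥ γ_{e,min}, and consequently √(1 − (4γ_e/(γ_e+1)²)^{M/2}) ≤ 2ε. -/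
set_option maxHeartbeats 1600000 in
/-- Theorem 5: With `φ = (1 − 4ε²)^{−2/M}` and
`γ_{e,min} = 2φ − 1 − 2√(φ(φ−1))`, if `γ ∈ [0,1]` with `γ < γ_{e,min}` and `P > 0` with
`P ≤ (1 − γ_{e,min})/(γ_{e,min} − γ)`, then `γ_e = (1 + γP)/(1 + P) ≥ γ_{e,min}` and the
worst-case TV upper bound is at most `2ε`. -/
theorem agots_max_pnr
    (M : ℕ) (hM : 0 < M) (ε : ℝ) (hε0 : 0 < ε) (hε1 : ε < 1 / 2)
    (φ γemin : ℝ)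
    (hφ : φ = (1 - 4 * ε ^ 2) ^ (-(2 : ℝ) / M))
    (hγemin : γemin = 2 * φ - 1 - 2 * Real.sqrt (φ * (φ - 1)))
    (γ : ℝ) (hγ0 : 0 ≤ γ) (hγ1 : γ ≤ 1) (hγ : γ < γemin)
    (P : ℝ) (hP0 : 0 < P) (hP : P ≤ (1 - γemin) / (γemin - γ))
    (γe : ℝ) (hγe : γe = (1 + γ * P) / (1 + P)) :
    γemin ≤ γe ∧
    Real.sqrt (1 - (4 * γe / (γe + 1) ^ 2) ^ ((M : ℝ) / 2)) ≤ 2 * ε := by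
  have hM' : (0:ℝ) < M := by exact_mod_cast hM
  have hc0 : (0:ℝ) < 1 - 4 * ε ^ 2 := by nlinarith
  have hc1 : (1:ℝ) - 4 * ε ^ 2 < 1 := by nlinarith
  have hφ1 : 1 < φ := by
    rw [hφ, Real.one_lt_rpow_iff_of_pos hc0]
    right
    exact ⟨hc1, div_neg_of_neg_of_pos (by norm_num) hM'⟩
  have hφ0 : 0 < φ := by linarith
  set s := Real.sqrt (φ * (φ - 1)) with hs
  have hs0 : 0 ≤ s := Real.sqrt_nonneg _
  have hs2 : s ^ 2 = φ * (φ - 1) := Real.sq_sqrt (by nlinarith)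
  have hγeminpos : 0 < γemin := lt_of_le_of_lt hγ0 hγ
  have hsge : φ - 1 ≤ s := by
    have h := Real.sqrt_le_sqrt (show (φ-1)^2 ≤ φ * (φ - 1) by nlinarith)
    rwa [Real.sqrt_sq (by linarith)] at h
  have hγemin1 : γemin ≤ 1 := by rw [hγemin]; linarith
  have hkey : (γemin + 1) ^ 2 = 4 * φ * γemin := by
    rw [hγemin]; linear_combination 4 * hs2
  -- Part 1
  have hPle : P * (γemin - γ) ≤ 1 - γemin :=
    (le_div_iff₀ (sub_pos.mpr hγ)).mp hP
  have hγege : γemin ≤ γe := by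
    rw [hγe, le_div_iff₀ (by linarith)]
    nlinarith [hPle]
  have hγele : γe ≤ 1 := by
    rw [hγe, div_le_one (by linarith)]
    nlinarith [mul_le_mul_of_nonneg_right hγ1 hP0.le]
  have hγepos : 0 < γe := lt_of_lt_of_le hγeminpos hγege
  refine ⟨hγege, ?_⟩
  -- Part 2
  have hprod : 0 ≤ (γe - γemin) * (1 - γe * γemin) := by
    apply mul_nonneg (by linarith)
    have h1 : γe * γemin ≤ 1 * 1 := mul_le_mul hγele hγemin1 hγeminpos.le zero_le_one
    linarith
  have h2 : γemin * (4 * φ * γe - (γe + 1) ^ 2) = (γe - γemin) * (1 - γe * γemin) := by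
    linear_combination -γe * hkey
  have hineq : (γe + 1) ^ 2 ≤ 4 * φ * γe := by
    have h4 : 0 ≤ γemin * (4 * φ * γe - (γe + 1) ^ 2) := h2 ▸ hprod
    have h5 : 0 ≤ 4 * φ * γe - (γe + 1) ^ 2 := nonneg_of_mul_nonneg_right h4 hγeminpos
    linarith
  have hsq : (0:ℝ) < (γe + 1) ^ 2 := by positivity
  have hdiv : 1 / φ ≤ 4 * γe / (γe + 1) ^ 2 := by
    rw [div_le_div_iff₀ hφ0 hsq]
    nlinarith [hineq]
  have hz : (0:ℝ) ≤ (M:ℝ) / 2 := by positivity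
  have hmono : (1 / φ) ^ ((M:ℝ)/2) ≤ (4 * γe / (γe + 1) ^ 2) ^ ((M:ℝ)/2) :=
    Real.rpow_le_rpow (by positivity) hdiv hz
  have hval : (1 / φ) ^ ((M:ℝ)/2) = 1 - 4 * ε ^ 2 := by
    rw [hφ, one_div, neg_div, Real.rpow_neg hc0.le, inv_inv,
      ← Real.rpow_mul hc0.le]
    rw [show (2:ℝ)/M * ((M:ℝ)/2) = 1 by field_simp, Real.rpow_one]
  calc Real.sqrt (1 - (4 * γe / (γe + 1) ^ 2) ^ ((M : ℝ) / 2))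
      ≤ Real.sqrt ((2*ε)^2) := Real.sqrt_le_sqrt (by nlinarith [hmono, hval])
    _ = 2 * ε := Real.sqrt_sq (by linarith)
end

section
/- Let M be a positive integer and fix γ ∈ [0,1]. For P ≥ 0 define γ_e(P) = (1 + γ·P)/(1 + P) and d_up(P) = √(1 − (4γ_e(P)/(γ_e(P)+1)²)^{M/2}). Then for all 0 ≤ P₁ ≤ P₂, d_up(P₁) ≤ d_up(P₂); that is, the worst-case upper bound on the total variation distance is monotone nondecreasing in the maximum plaintext-to-noise power ratio, so it is lower in a noisy case (finite PNR_max) than in the noiseless case. -/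
/-- For fixed `γ ∈ [0,1]`, with `γ_e(P) = (1 + γP)/(1 + P)`, the worst-case
TV upper bound `d_up(P) = √(1 − (4γ_e(P)/(γ_e(P)+1)²)^{M/2})` is monotone nondecreasing in
the maximum plaintext-to-noise power ratio `P`. -/
theorem agots_tv_up_monotone_in_pnr
    (M : ℕ) (hM : 0 < M) (γ : ℝ) (hγ0 : 0 ≤ γ) (hγ1 : γ ≤ 1)
    (P₁ P₂ : ℝ) (hP₁ : 0 ≤ P₁) (hP : P₁ ≤ P₂) :
    Real.sqrt (1 -
        (4 * ((1 + γ * P₁) / (1 + P₁)) / ((1 + γ * P₁) / (1 + P₁) + 1) ^ 2) ^ ((M : ℝ) / 2))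
      ≤ Real.sqrt (1 -
        (4 * ((1 + γ * P₂) / (1 + P₂)) / ((1 + γ * P₂) / (1 + P₂) + 1) ^ 2) ^ ((M : ℝ) / 2)) := by
  have h0P₂ : 0 ≤ P₂ := hP₁.trans hP
  set t₁ := (1 + γ * P₁) / (1 + P₁) with ht₁
  set t₂ := (1 + γ * P₂) / (1 + P₂) with ht₂
  have hd₁ : (0:ℝ) < 1 + P₁ := by linarith
  have hd₂ : (0:ℝ) < 1 + P₂ := by linarith
  have hn₁ : (0:ℝ) < 1 + γ * P₁ := by nlinarith
  have hn₂ : (0:ℝ) < 1 + γ * P₂ := by nlinarith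
  have ht₁pos : 0 < t₁ := div_pos hn₁ hd₁
  have ht₂pos : 0 < t₂ := div_pos hn₂ hd₂
  have ht₁le1 : t₁ ≤ 1 := by rw [ht₁, div_le_one hd₁]; nlinarith
  have hle : t₂ ≤ t₁ := by
    rw [ht₁, ht₂, div_le_div_iff₀ hd₂ hd₁]
    nlinarith
  have hprod : t₁ * t₂ ≤ 1 := by nlinarith
  have hf : 4 * t₂ / (t₂ + 1) ^ 2 ≤ 4 * t₁ / (t₁ + 1) ^ 2 := by
    rw [div_le_div_iff₀ (by positivity) (by positivity)]
    nlinarith [mul_nonneg (sub_nonneg.mpr hle) (sub_nonneg.mpr hprod)]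
  have hf₂pos : 0 ≤ 4 * t₂ / (t₂ + 1) ^ 2 := by positivity
  have hrp := Real.rpow_le_rpow hf₂pos hf (by positivity : (0:ℝ) ≤ (M:ℝ)/2)
  exact Real.sqrt_le_sqrt (by linarith)
end
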